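/- arXiv:1204.4839 — 5 statements merged into one kernel-verified Lean document; each statement's English description precedes it below -/
import Mathlib

section
/- Let X ⊆ ℕ be infinite and α : ℕ → 𝕋. Then α ∈ F_X if and only if both lim_{j→∞} Δ_{I(X,j)}(α, 1) = 0 and lim_{j→∞} Δ_{{n(X,j), n(X,j+1)}}(α, 1) = 0. -/
open Filter Topology MultiplierAlgebra

noncomputable section

/-- `Δ_I(α,β) = max_{i,j ∈ I} |α(i)·conj(α(j)) − β(i)·conj(β(j))|`
(the maximum over the empty set being `0`). -/
def Delta (I : Finset ℕ) (α β : ℕ → Circle) : ℝ :=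
  ((I ×ˢ I).sup fun p : ℕ × ℕ =>
    ‖(α p.1 : ℂ) * (starRingEnd ℂ) (α p.2 : ℂ) -
      (β p.1 : ℂ) * (starRingEnd ℂ) (β p.2 : ℂ)‖₊ : NNReal)

/-- `n(X,j)`: the `j`-th element of `{0} ∪ X` in increasing order. -/
def nEnum (X : Set ℕ) (j : ℕ) : ℕ := Nat.nth (· ∈ insert 0 X) j

/-- `I(X,j) = [n(X,j), n(X,j+1))`, as a finite set of naturals. -/
def intvl (X : Set ℕ) (j : ℕ) : Finset ℕ := Finset.Ico (nEnum X j) (nEnum X (j + 1))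

/-- Membership in `F_X`: `lim_j Δ_{I(X,j) ∪ I(X,j+1)}(α, 1) = 0`. -/
def memF (X : Set ℕ) (α : ℕ → Circle) : Prop :=
  Tendsto (fun j => Delta (intvl X j ∪ intvl X (j + 1)) α 1) atTop (𝓝 0)

/-- `Y ⊆* X`: almost inclusion, i.e. `Y \ X` is finite. -/
def AlmostSubset (Y X : Set ℕ) : Prop := (Y \ X).Finite

/-! Since `|a·conj b − 1| = |a − b|` on the circle, `Δ_I(α, 1)` is the diameter of `α '' I`.
Both conditions follow from monotonicity of the diameter, and conversely
`diam (A ∪ B) ≤ diam A + dist a b + diam B` for `a ∈ A`, `b ∈ B`, applied with the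
endpoints `a = α(n(X,j)) ∈ α '' I(X,j)`, `b = α(n(X,j+1)) ∈ α '' I(X,j+1)`. -/

open Metric

lemma Circle.norm_mul_conj_sub_one (z w : Circle) :
    ‖(z : ℂ) * starRingEnd ℂ w - 1‖ = dist z w := by
  have hw : (w : ℂ) * starRingEnd ℂ w = 1 := by
    rw [Complex.mul_conj, Circle.normSq_coe, Complex.ofReal_one]
  rw [show (z : ℂ) * starRingEnd ℂ w - 1 = (z - w) * starRingEnd ℂ w by linear_combination hw,
    norm_mul, Complex.norm_conj, Circle.norm_coe, mul_one]
  exact (dist_eq_norm (z : ℂ) w).symm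

lemma Finset.coe_sup_nndist_eq_diam {ι E : Type*} [PseudoMetricSpace E] (I : Finset ι)
    (f : ι → E) :
    (((I ×ˢ I).sup fun p => nndist (f p.1) (f p.2) : NNReal) : ℝ) = diam (f '' I) := by
  apply le_antisymm
  · rw [← Real.coe_toNNReal _ diam_nonneg, NNReal.coe_le_coe]
    refine Finset.sup_le fun p hp => ?_
    rw [Finset.mem_product] at hp
    rw [← NNReal.coe_le_coe, Real.coe_toNNReal _ diam_nonneg, coe_nndist]
    exact dist_le_diam_of_mem ((I.finite_toSet.image f).isBounded)
      (Set.mem_image_of_mem f hp.1) (Set.mem_image_of_mem f hp.2)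
  · refine diam_le_of_forall_dist_le (NNReal.coe_nonneg _) ?_
    rintro _ ⟨i, hi, rfl⟩ _ ⟨j, hj, rfl⟩
    rw [← coe_nndist, NNReal.coe_le_coe]
    exact Finset.le_sup (f := fun p => nndist (f p.1) (f p.2))
      (Finset.mem_product.2 ⟨hi, hj⟩ : (i, j) ∈ I ×ˢ I)

lemma Delta_one_eq_diam (I : Finset ℕ) (α : ℕ → Circle) : Delta I α 1 = diam (α '' I) := by
  rw [Delta, ← Finset.coe_sup_nndist_eq_diam]
  congr 2
  ext p
  simp [← Circle.norm_mul_conj_sub_one]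

lemma tendsto_diam_union_succ_iff {E : Type*} [PseudoMetricSpace E] {s : ℕ → Set E}
    (hs : ∀ j, Bornology.IsBounded (s j)) {a : ℕ → E} (ha : ∀ j, a j ∈ s j) :
    Tendsto (fun j => diam (s j ∪ s (j + 1))) atTop (𝓝 0) ↔
      Tendsto (fun j => diam (s j)) atTop (𝓝 0) ∧
        Tendsto (fun j => dist (a j) (a (j + 1))) atTop (𝓝 0) := by
  have hunion j : Bornology.IsBounded (s j ∪ s (j + 1)) := (hs j).union (hs (j + 1))
  constructor
  · intro h
    refine ⟨squeeze_zero (fun _ => diam_nonneg) (fun j => ?_) h,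
      squeeze_zero (fun _ => dist_nonneg) (fun j => ?_) h⟩
    · exact diam_mono Set.subset_union_left (hunion j)
    · exact dist_le_diam_of_mem (hunion j) (Or.inl (ha j)) (Or.inr (ha (j + 1)))
  · rintro ⟨hdiam, hdist⟩
    have hsum := (hdiam.add hdist).add (hdiam.comp (tendsto_add_atTop_nat 1))
    rw [add_zero, add_zero] at hsum
    exact squeeze_zero (fun _ => diam_nonneg) (fun j => diam_union (ha j) (ha (j + 1))) hsum

lemma nEnum_mem_intvl {X : Set ℕ} (hX : X.Infinite) (j : ℕ) : nEnum X j ∈ intvl X j :=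
  Finset.mem_Ico.2 ⟨le_rfl, Nat.nth_strictMono (hX.mono (Set.subset_insert 0 X)) j.lt_succ_self⟩

/-- `α ∈ F_X` iff `Δ_{I(X,j)}(α,1) → 0` and
`Δ_{{n(X,j),n(X,j+1)}}(α,1) → 0`. -/
theorem memF_iff (X : Set ℕ) (hX : X.Infinite) (α : ℕ → Circle) :
    memF X α ↔
      (Tendsto (fun j => Delta (intvl X j) α 1) atTop (𝓝 0) ∧
        Tendsto (fun j => Delta {nEnum X j, nEnum X (j + 1)} α 1) atTop (𝓝 0)) := by
  simp only [memF, Delta_one_eq_diam, Finset.coe_union, Finset.coe_pair, Set.image_union,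
    Set.image_pair, diam_pair]
  exact tendsto_diam_union_succ_iff (fun j => ((intvl X j).finite_toSet.image α).isBounded)
    (fun j => Set.mem_image_of_mem α (nEnum_mem_intvl hX j))
end
end

section
/- Let X, Y ⊆ ℕ be infinite sets with Y ⊆* X (i.e. Y \ X is finite). Then F_Y ⊆ F_X. -/
open Filter Topology MultiplierAlgebra

noncomputable section

/-! Beyond the finitely many points of `Y \ X`, every point of `{0} ∪ Y` lies in `{0} ∪ X`.
Choose `k = k(j)` with `n(Y,k) ≤ n(X,j) < n(Y,k+1)`. The points `n(Y,k+1) < n(Y,k+2)` cannot both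
lie strictly between `n(X,j)` and `n(X,j+2)`, because the only point of `{0} ∪ X` there is
`n(X,j+1)`; so `I(X,j) ∪ I(X,j+1) ⊆ I(Y,k) ∪ I(Y,k+1)`. Since `Δ_I` is monotone in `I` and
`k(j) → ∞`, the sequence defining `F_Y` dominates the one defining `F_X` along `k`. -/

lemma Delta_nonneg (I : Finset ℕ) (α β : ℕ → Circle) : 0 ≤ Delta I α β :=
  NNReal.coe_nonneg _

lemma Delta_mono {I J : Finset ℕ} (h : I ⊆ J) (α β : ℕ → Circle) :
    Delta I α β ≤ Delta J α β := by
  unfold Delta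
  exact_mod_cast Finset.sup_mono (Finset.product_subset_product h h)

lemma AlmostSubset.eventually_mem_insert_zero {X Y : Set ℕ} (h : AlmostSubset Y X) :
    ∀ᶠ m in atTop, m ∈ insert 0 Y → m ∈ insert 0 X := by
  rw [← Nat.cofinite_eq_atTop, eventually_cofinite]
  refine h.subset fun m hm => ?_
  simp only [Set.mem_ofPred_eq, Set.mem_insert_iff, Classical.not_imp, not_or] at hm
  obtain ⟨hmY | hmY, hm0, hmX⟩ := hm
  exacts [absurd hmY hm0, ⟨hmY, hmX⟩]

section nEnum

variable {X : Set ℕ}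

lemma nEnum_zero (X : Set ℕ) : nEnum X 0 = 0 :=
  Nat.nth_zero_of_zero (Set.mem_insert 0 X)

lemma nEnum_strictMono (hX : X.Infinite) : StrictMono (nEnum X) :=
  Nat.nth_strictMono (hX.mono (Set.subset_insert 0 X))

lemma nEnum_mem (hX : X.Infinite) (j : ℕ) : nEnum X j ∈ insert 0 X :=
  Nat.nth_mem_of_infinite (hX.mono (Set.subset_insert 0 X)) j

lemma tendsto_nEnum_atTop (hX : X.Infinite) : Tendsto (nEnum X) atTop atTop :=
  (nEnum_strictMono hX).tendsto_atTop

lemma exists_nEnum_le_lt (hX : X.Infinite) (m : ℕ) :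
    ∃ k, nEnum X k ≤ m ∧ m < nEnum X (k + 1) := by
  obtain ⟨k, hk, hk'⟩ := (nEnum_strictMono hX).exists_between_of_tendsto_atTop
    (tendsto_nEnum_atTop hX) (x := m + 1) (by rw [nEnum_zero]; omega)
  exact ⟨k, by omega, by omega⟩

lemma intvl_union_intvl_succ (hX : X.Infinite) (j : ℕ) :
    intvl X j ∪ intvl X (j + 1) = Finset.Ico (nEnum X j) (nEnum X (j + 2)) :=
  have h := (nEnum_strictMono hX).monotone
  Finset.Ico_union_Ico_eq_Ico (h (by omega)) (h (by omega))

lemma eq_nEnum_succ_of_lt_of_lt (hX : X.Infinite) {m j : ℕ} (hm : m ∈ insert 0 X)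
    (h₁ : nEnum X j < m) (h₂ : m < nEnum X (j + 2)) : m = nEnum X (j + 1) := by
  classical
  obtain ⟨i, rfl⟩ : ∃ i, nEnum X i = m := ⟨_, Nat.nth_count hm⟩
  have hi : i = j + 1 := by
    have := (nEnum_strictMono hX).lt_iff_lt.1 h₁
    have := (nEnum_strictMono hX).lt_iff_lt.1 h₂
    omega
  rw [hi]

end nEnum

lemma Ico_nEnum_subset_Ico_nEnum {X Y : Set ℕ} (hX : X.Infinite) (hY : Y.Infinite) {N : ℕ}
    (hN : ∀ m ≥ N, m ∈ insert 0 Y → m ∈ insert 0 X) {j k : ℕ} (hj : N ≤ nEnum X j)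
    (hk : nEnum Y k ≤ nEnum X j) (hk' : nEnum X j < nEnum Y (k + 1)) :
    Finset.Ico (nEnum X j) (nEnum X (j + 2)) ⊆ Finset.Ico (nEnum Y k) (nEnum Y (k + 2)) := by
  refine Finset.Ico_subset_Ico hk (not_lt.1 fun h => ?_)
  have hlt : nEnum Y (k + 1) < nEnum Y (k + 2) := nEnum_strictMono hY (by omega)
  have mem_X : ∀ i, nEnum X j < nEnum Y i → nEnum Y i ∈ insert 0 X := fun i hi =>
    hN _ (by omega) (nEnum_mem hY i)
  have h₁ := eq_nEnum_succ_of_lt_of_lt hX (mem_X _ hk') hk' (hlt.trans h)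
  have h₂ := eq_nEnum_succ_of_lt_of_lt hX (mem_X _ (hk'.trans hlt)) (hk'.trans hlt) h
  omega

lemma tendsto_atTop_of_lt_nEnum_succ {Y : Set ℕ} (hY : Y.Infinite) {u k : ℕ → ℕ}
    (hu : Tendsto u atTop atTop) (hk : ∀ j, u j < nEnum Y (k j + 1)) :
    Tendsto k atTop atTop := by
  refine tendsto_atTop.2 fun K => ?_
  filter_upwards [hu.eventually_ge_atTop (nEnum Y K)] with j hj
  have := (nEnum_strictMono hY).lt_iff_lt.1 (hj.trans_lt (hk j))
  omega

/-- if `Y ⊆* X` then `F_Y ⊆ F_X`. -/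
theorem F_mono (X Y : Set ℕ) (hX : X.Infinite) (hY : Y.Infinite)
    (hYX : AlmostSubset Y X) :
    ∀ α : ℕ → Circle, memF Y α → memF X α := by
  intro α hα
  obtain ⟨N, hN⟩ := eventually_atTop.1 hYX.eventually_mem_insert_zero
  choose k hk using fun j => exists_nEnum_le_lt hY (nEnum X j)
  have hk_tendsto : Tendsto k atTop atTop :=
    tendsto_atTop_of_lt_nEnum_succ hY (tendsto_nEnum_atTop hX) fun j => (hk j).2
  refine squeeze_zero' (Eventually.of_forall fun j => Delta_nonneg _ _ _) ?_ (hα.comp hk_tendsto)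
  filter_upwards [(tendsto_nEnum_atTop hX).eventually_ge_atTop N] with j hj
  rw [Function.comp_apply, intvl_union_intvl_succ hX, intvl_union_intvl_succ hY]
  exact Delta_mono (Ico_nEnum_subset_Ico_nEnum hX hY hN hj (hk j).1 (hk j).2) α 1
end
end

section
/- Let A be a C*-algebra with a sequence of projections r_i witnessing Hypothesis (P). Then for every m in the multiplier algebra M(A) there exist an infinite subset X ⊆ ℕ and elements d ∈ DD_X(A) and a ∈ A (identified with its canonical image in M(A)) such that m = d + a. -/
/-!
Choose `0 = n₀ < n₁ < ⋯` such that, writing `e_k = p_{n_k}`, the corners `e_k m (1 - e_{k+1})` and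
`(1 - e_{k+1}) m e_k` have norm at most `2⁻ᵏ`: this is possible because `e_k m` and `m e_k` lie in
`A`, on which the partial sums act as an approximate unit. For `X = {n₁, n₂, …}` the blocks are
`q_j = p_{I(X,j)} = e_{j+1} - e_j`. The series `a = ∑ₖ (e_{k+1} m q_{k+2} + q_{k+2} m e_{k+1})`
converges absolutely in `A`, and when `|i - j| ≥ 2` compressing it by `q_i · … · q_j` kills every
term except the one with `k + 2 = max i j`, which becomes `q_i m q_j`. Hence `m - a ∈ DD_X(A)`.
-/

open Filter Topology MultiplierAlgebra

noncomputable section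


/-- Hypothesis (P): a sequence of mutually orthogonal projections `r_i` with
`r_i A r_j ≠ 0` for all `i, j`, whose partial sums form an approximate unit. -/
structure IsHypP {A : Type*} [NonUnitalCStarAlgebra A] (r : ℕ → A) : Prop where
  selfadj : ∀ i, star (r i) = r i
  idem : ∀ i, r i * r i = r i
  orth : ∀ i j, i ≠ j → r i * r j = 0
  nonzero : ∀ i j, ∃ a : A, r i * a * r j ≠ 0
  approx : ∀ a : A,
    Tendsto (fun n => ‖(∑ i ∈ Finset.range n, r i) * a - a‖) atTop (𝓝 0)

section DD

variable {A : Type*} [NonUnitalCStarAlgebra A]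

/-- `p_I = ∑_{i ∈ I} r_i`. -/
def pI (r : ℕ → A) (I : Finset ℕ) : A := ∑ i ∈ I, r i

/-- The set `DD_X(A)` of multipliers `m` with `p_{I(X,i)} · m · p_{I(X,j)} = 0`
whenever `|i - j| ≥ 2`. -/
def DD (r : ℕ → A) (X : Set ℕ) : Set 𝓜(ℂ, A) :=
  {m | ∀ i j : ℕ, 2 ≤ |(i : ℤ) - (j : ℤ)| →
    ((pI r (intvl X i) : A) : 𝓜(ℂ, A)) * m * ((pI r (intvl X j) : A) : 𝓜(ℂ, A)) = 0}

end DD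

namespace DoubleCentralizer

section CStarRing

variable {𝕜 A : Type*} [NontriviallyNormedField 𝕜] [NonUnitalNormedRing A] [StarRing A]
  [CStarRing A] [NormedSpace 𝕜 A] [SMulCommClass 𝕜 A A] [IsScalarTower 𝕜 A A]

theorem fst_apply_mul (m : 𝓜(𝕜, A)) (a b : A) : m.fst (a * b) = m.fst a * b := by
  refine sub_eq_zero.mp <| (CStarRing.star_mul_self_eq_zero_iff _).mp ?_
  rw [mul_sub, ← m.central, ← mul_assoc, m.central, mul_assoc, sub_self]

theorem snd_apply_mul (m : 𝓜(𝕜, A)) (a b : A) : m.snd (a * b) = a * m.snd b := by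
  refine sub_eq_zero.mp <| (CStarRing.mul_star_self_eq_zero_iff _).mp ?_
  rw [sub_mul, m.central, mul_assoc, ← m.central, ← mul_assoc, sub_self]

theorem mul_coe_eq_coe_fst (m : 𝓜(𝕜, A)) (a : A) : m * (a : 𝓜(𝕜, A)) = (m.fst a : A) := by
  ext x
  · simpa [mul_fst] using fst_apply_mul m a x
  · simpa [mul_snd] using m.central x a

theorem coe_mul_eq_coe_snd (a : A) (m : 𝓜(𝕜, A)) : (a : 𝓜(𝕜, A)) * m = (m.snd a : A) := by
  ext x
  · simpa [mul_fst] using (m.central a x).symm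
  · simpa [mul_snd] using snd_apply_mul m x a

end CStarRing

variable {A : Type*} [NonUnitalCStarAlgebra A]

theorem coe_mul (a b : A) : ((a * b : A) : 𝓜(ℂ, A)) = a * b := map_mul (coeHom (𝕜 := ℂ)) a b

theorem coe_add (a b : A) : ((a + b : A) : 𝓜(ℂ, A)) = a + b := map_add (coeHom (𝕜 := ℂ)) a b

theorem coe_sub (a b : A) : ((a - b : A) : 𝓜(ℂ, A)) = a - b := map_sub (coeHom (𝕜 := ℂ)) a b

theorem coe_mul_mul_coe (x y : A) (m : 𝓜(ℂ, A)) : (x : 𝓜(ℂ, A)) * m * y = (x * m.fst y : A) := by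
  rw [mul_assoc, mul_coe_eq_coe_fst, coe_mul]

theorem norm_coe (a : A) : ‖(a : 𝓜(ℂ, A))‖ = ‖a‖ := by
  rw [← norm_fst, coe_fst, ContinuousLinearMap.opNorm_mul_apply]

theorem exists_hasSum_coe {ι : Type*} {f : ι → 𝓜(ℂ, A)}
    (hf : ∀ i, f i ∈ Set.range ((↑) : A → 𝓜(ℂ, A))) (hs : Summable fun i => ‖f i‖) :
    ∃ a : A, HasSum f a := by
  choose g hg using hf
  have hg_summable : Summable g := .of_norm <| by simpa only [← hg, norm_coe] using hs
  refine ⟨∑' i, g i, ?_⟩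
  simpa only [Function.comp_def, coeHom_apply, hg] using hg_summable.hasSum.map (coeHom (𝕜 := ℂ))
    (AddMonoidHomClass.isometry_of_norm _ norm_coe).continuous

end DoubleCentralizer

def IsIdempotentChain {R : Type*} [Mul R] (e : ℕ → R) : Prop :=
  ∀ i j, e i * e j = e (min i j)

namespace IdempotentChain

variable {R : Type*} [NonUnitalRing R]

def block (e : ℕ → R) (j : ℕ) : R := e (j + 1) - e j

def cornerTerm (e : ℕ → R) (m : R) (k : ℕ) : R :=
  e (k + 1) * m * block e (k + 2) + block e (k + 2) * m * e (k + 1)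

end IdempotentChain

namespace IsIdempotentChain

open IdempotentChain

section Ring

variable {R : Type*} [NonUnitalRing R] {e : ℕ → R} (he : IsIdempotentChain e) {i j k : ℕ}
include he

theorem block_mul_of_le (h : k ≤ j) : block e j * e k = 0 := by
  rw [block, sub_mul, he, he, min_eq_right (by omega), min_eq_right h, sub_self]

theorem mul_block_of_le (h : k ≤ j) : e k * block e j = 0 := by
  rw [block, mul_sub, he, he, min_eq_left (by omega), min_eq_left h, sub_self]

theorem block_mul_of_lt (h : j < k) : block e j * e k = block e j := by
  rw [block, sub_mul, he, he, min_eq_left h, min_eq_left (by omega)]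

theorem mul_block_of_lt (h : j < k) : e k * block e j = block e j := by
  rw [block, mul_sub, he, he, min_eq_right h, min_eq_right (by omega)]

theorem block_mul_block : block e i * block e j = if i = j then block e i else 0 := by
  rw [block.eq_1 e j, mul_sub]
  split_ifs with hij
  · rw [hij, he.block_mul_of_lt (Nat.lt_succ_self j), he.block_mul_of_le le_rfl, sub_zero]
  · rcases Nat.lt_or_gt_of_ne hij with h | h
    · rw [he.block_mul_of_lt (by omega), he.block_mul_of_lt h, sub_self]
    · rw [he.block_mul_of_le (by omega), he.block_mul_of_le h.le, sub_self]

theorem block_mul_cornerTerm_mul_block (hij : i + 2 ≤ j ∨ j + 2 ≤ i) (m : R) (k : ℕ) :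
    block e i * cornerTerm e m k * block e j =
      if k + 2 = max i j then block e i * m * block e j else 0 := by
  have : block e i * cornerTerm e m k * block e j =
      (block e i * e (k + 1)) * m * (block e (k + 2) * block e j) +
        (block e i * block e (k + 2)) * m * (e (k + 1) * block e j) := by
    simp only [cornerTerm, mul_add, add_mul, mul_assoc]
  rw [this, he.block_mul_block, he.block_mul_block]
  rcases hij with h | h
  · rw [max_eq_right (by omega)]
    by_cases hk : k + 2 = j
    · subst hk
      rw [if_pos rfl, if_pos rfl, if_neg (by omega), he.block_mul_of_lt (by omega), zero_mul,
        zero_mul, add_zero]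
    · rw [if_neg hk, if_neg hk, mul_zero, zero_add]
      split_ifs with hi
      · rw [he.mul_block_of_le (by omega), mul_zero]
      · rw [zero_mul, zero_mul]
  · rw [max_eq_left (by omega)]
    by_cases hk : k + 2 = i
    · subst hk
      rw [if_pos rfl, if_pos rfl, if_neg (by omega), he.mul_block_of_lt (by omega), mul_zero,
        zero_add]
    · rw [if_neg hk, if_neg (Ne.symm hk), zero_mul, zero_mul, add_zero]
      split_ifs with hj
      · rw [he.block_mul_of_le (by omega), zero_mul, zero_mul]
      · rw [mul_zero]

theorem block_mul_mul_block_of_hasSum [TopologicalSpace R] [IsTopologicalRing R] [T2Space R]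
    {m a : R} (ha : HasSum (cornerTerm e m) a) (hij : i + 2 ≤ j ∨ j + 2 ≤ i) :
    block e i * a * block e j = block e i * m * block e j := by
  have hsum := (ha.mul_left (block e i)).mul_right (block e j)
  have hidx : ∀ k, k + 2 = max i j ↔ k = max i j - 2 := fun k => by omega
  simp only [he.block_mul_cornerTerm_mul_block hij, hidx] at hsum
  exact hsum.unique (hasSum_ite_eq _ _)

end Ring

theorem isStarProjection_block {R : Type*} [NonUnitalRing R] [StarRing R] {e : ℕ → R}
    (he : IsIdempotentChain e) (hp : ∀ k, IsStarProjection (e k)) (j : ℕ) :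
    IsStarProjection (block e j) :=
  (hp j).sub_of_mul_eq_left (hp (j + 1)) (by rw [he, min_eq_left (Nat.le_succ j)])

theorem norm_cornerTerm_le {R : Type*} [NonUnitalNormedRing R] {e : ℕ → R}
    (he : IsIdempotentChain e) (hblock : ∀ j, ‖block e j‖ ≤ 1) (m : R) (k : ℕ) :
    ‖cornerTerm e m k‖ ≤ ‖e (k + 1) * m - e (k + 1) * m * e (k + 2)‖ +
      ‖m * e (k + 1) - e (k + 2) * m * e (k + 1)‖ := by
  have hleft : e (k + 1) * m * block e (k + 2) =
      (e (k + 1) * m - e (k + 1) * m * e (k + 2)) * block e (k + 2) := by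
    rw [sub_mul, mul_assoc _ (e (k + 2)), he.mul_block_of_le le_rfl, mul_zero, sub_zero]
  have hright : block e (k + 2) * m * e (k + 1) =
      block e (k + 2) * (m * e (k + 1) - e (k + 2) * m * e (k + 1)) := by
    rw [mul_sub, mul_assoc (e (k + 2)), ← mul_assoc (block e (k + 2)) (e (k + 2)),
      he.block_mul_of_le le_rfl, zero_mul, sub_zero, mul_assoc]
  rw [cornerTerm, hleft, hright]
  refine (norm_add_le _ _).trans (add_le_add ?_ ?_)
  · exact (norm_mul_le _ _).trans (mul_le_of_le_one_right (norm_nonneg _) (hblock _))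
  · exact (norm_mul_le _ _).trans (mul_le_of_le_one_left (norm_nonneg _) (hblock _))

end IsIdempotentChain

open IdempotentChain DoubleCentralizer

theorem DoubleCentralizer.cornerTerm_coe_mem_range {A : Type*} [NonUnitalCStarAlgebra A]
    (x : ℕ → A) (m : 𝓜(ℂ, A)) (k : ℕ) :
    cornerTerm (fun k => (x k : 𝓜(ℂ, A))) m k ∈ Set.range ((↑) : A → 𝓜(ℂ, A)) := by
  refine ⟨x (k + 1) * m.fst (x (k + 2 + 1) - x (k + 2)) +
    (x (k + 2 + 1) - x (k + 2)) * m.fst (x (k + 1)), ?_⟩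
  simp only [cornerTerm, block, ← coe_sub, coe_mul_mul_coe, coe_add]

theorem exists_strictMono_zero_of_eventually {p : ℕ → ℕ → ℕ → Prop}
    (h : ∀ k a, ∀ᶠ b in atTop, p k a b) :
    ∃ n : ℕ → ℕ, StrictMono n ∧ n 0 = 0 ∧ ∀ k, p k (n k) (n (k + 1)) := by
  choose f hf using fun k a => ((h k a).and (eventually_gt_atTop a)).exists
  exact ⟨fun k => Nat.rec 0 f k, strictMono_nat_of_lt_succ fun k => (hf k _).2, rfl,
    fun k => (hf k _).1⟩

theorem nEnum_range_succ {n : ℕ → ℕ} (hn : StrictMono n) (h0 : n 0 = 0) :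
    nEnum (Set.range fun k => n (k + 1)) = n := by
  have hrange : insert 0 (Set.range fun k => n (k + 1)) = Set.range n := by
    rw [Set.insert_eq, ← h0]
    exact Nat.range_of_succ n
  have hinf : (Set.ofPred (· ∈ Set.range n)).Infinite := by
    rw [Set.ofPred_mem_eq]
    exact Set.infinite_range_of_injective hn.injective
  unfold nEnum
  rw [hrange]
  exact ((Nat.nth_strictMono hinf).range_inj hn).mp
    (by rw [Nat.range_nth_of_infinite hinf, Set.ofPred_mem_eq])

theorem pI_Ico {A : Type*} [NonUnitalCStarAlgebra A] (r : ℕ → A) {a b : ℕ} (h : a ≤ b) :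
    pI r (Finset.Ico a b) = pI r (Finset.range b) - pI r (Finset.range a) :=
  Finset.sum_Ico_eq_sub _ h

namespace IsHypP

variable {A : Type*} [NonUnitalCStarAlgebra A] {r : ℕ → A} (hr : IsHypP r)
include hr

theorem mul_eq_ite (i j : ℕ) : r i * r j = if i = j then r i else 0 := by
  split_ifs with h
  · rw [h, hr.idem]
  · exact hr.orth i j h

theorem pI_mul_pI (I J : Finset ℕ) : pI r I * pI r J = pI r (I ∩ J) := by
  classical
  simp only [pI, Finset.sum_mul_sum, hr.mul_eq_ite, Finset.sum_ite_eq, Finset.sum_ite_mem]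

theorem isStarProjection_pI (I : Finset ℕ) : IsStarProjection (pI r I) where
  isSelfAdjoint := by simp only [IsSelfAdjoint, pI, star_sum, hr.selfadj]
  isIdempotentElem := by rw [IsIdempotentElem, hr.pI_mul_pI, Finset.inter_self]

theorem tendsto_norm_mul_pI_range_sub (a : A) :
    Tendsto (fun N => ‖a * pI r (Finset.range N) - a‖) atTop (𝓝 0) := by
  refine (hr.approx (star a)).congr fun N => ?_
  rw [← norm_star, star_sub, star_mul, star_star]
  exact congr(‖a * $((hr.isStarProjection_pI _).isSelfAdjoint.star_eq) - a‖)

theorem tendsto_norm_sub_pI_range_mul (m : 𝓜(ℂ, A)) (x : A) :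
    Tendsto (fun N => ‖m * x - ((pI r (Finset.range N) : A) : 𝓜(ℂ, A)) * m * x‖) atTop (𝓝 0) := by
  simp only [mul_assoc _ m, mul_coe_eq_coe_fst m, ← coe_mul, ← coe_sub, norm_coe]
  exact (hr.approx _).congr fun N => norm_sub_rev _ _

theorem tendsto_norm_sub_mul_pI_range (m : 𝓜(ℂ, A)) (x : A) :
    Tendsto (fun N => ‖x * m - x * m * ((pI r (Finset.range N) : A) : 𝓜(ℂ, A))‖) atTop (𝓝 0) := by
  simp only [coe_mul_eq_coe_snd x m, ← coe_mul, ← coe_sub, norm_coe]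
  exact (hr.tendsto_norm_mul_pI_range_sub _).congr fun N => norm_sub_rev _ _

theorem exists_strictMono_offDiagonal_le (m : 𝓜(ℂ, A)) :
    ∃ n : ℕ → ℕ, StrictMono n ∧ n 0 = 0 ∧ ∀ k,
      ‖((pI r (Finset.range (n k)) : A) : 𝓜(ℂ, A)) * m -
          ((pI r (Finset.range (n k)) : A) : 𝓜(ℂ, A)) * m *
            ((pI r (Finset.range (n (k + 1))) : A) : 𝓜(ℂ, A))‖ ≤ (1 / 2) ^ k ∧
      ‖m * ((pI r (Finset.range (n k)) : A) : 𝓜(ℂ, A)) -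
          ((pI r (Finset.range (n (k + 1))) : A) : 𝓜(ℂ, A)) * m *
            ((pI r (Finset.range (n k)) : A) : 𝓜(ℂ, A))‖ ≤ (1 / 2) ^ k := by
  have hε (k : ℕ) : (0 : ℝ) < (1 / 2) ^ k := by positivity
  obtain ⟨n, hn, hn0, hsmall⟩ := exists_strictMono_zero_of_eventually fun k a =>
    ((hr.tendsto_norm_sub_mul_pI_range m (pI r (Finset.range a))).eventually_le_const (hε k)).and
      ((hr.tendsto_norm_sub_pI_range_mul m (pI r (Finset.range a))).eventually_le_const (hε k))
  exact ⟨n, hn, hn0, hsmall⟩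

end IsHypP

/-- STATEMENT 13: every multiplier `m ∈ M(A)` decomposes as `m = d + a` with
`d ∈ DD_X(A)` for some infinite `X ⊆ ℕ` and `a ∈ A`. -/
theorem multiplier_decomposition (A : Type*) [NonUnitalCStarAlgebra A] (r : ℕ → A)
    (hr : IsHypP r) (m : 𝓜(ℂ, A)) :
    ∃ X : Set ℕ, X.Infinite ∧ ∃ d ∈ DD r X, ∃ a : A, m = d + (a : 𝓜(ℂ, A)) := by
  obtain ⟨n, hn, hn0, hsmall⟩ := hr.exists_strictMono_offDiagonal_le m
  set X : Set ℕ := Set.range fun k => n (k + 1)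
  set e : ℕ → 𝓜(ℂ, A) := fun k => (pI r (Finset.range (n k)) : A)
  have he : IsIdempotentChain e := fun i j => by
    simp only [e, ← coe_mul, hr.pI_mul_pI, Finset.range_inter_range, hn.monotone.map_min]
  have hblock : ∀ j, ((pI r (intvl X j) : A) : 𝓜(ℂ, A)) = block e j :=
    fun j => by rw [intvl, nEnum_range_succ hn hn0, pI_Ico r (hn.monotone j.le_succ), coe_sub]; rfl
  have hnorm : ∀ j, ‖block e j‖ ≤ 1 := fun j =>
    (he.isStarProjection_block (fun k => (hr.isStarProjection_pI _).map coeHom) j).norm_le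
  have hsum : Summable fun k => ‖cornerTerm e m k‖ := by
    refine summable_geometric_two.of_nonneg_of_le (fun _ => norm_nonneg _) fun k => ?_
    calc ‖cornerTerm e m k‖ ≤ (1 / 2) ^ (k + 1) + (1 / 2) ^ (k + 1) :=
          (he.norm_cornerTerm_le hnorm m k).trans (add_le_add (hsmall (k + 1)).1 (hsmall (k + 1)).2)
      _ = (1 / 2) ^ k := by ring
  obtain ⟨a, ha⟩ := exists_hasSum_coe (cornerTerm_coe_mem_range _ m) hsum
  refine ⟨X, Set.infinite_range_of_injective (hn.injective.comp Nat.succ_injective), m - a,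
    fun i j hij => ?_, a, (sub_add_cancel m _).symm⟩
  have hfar : i + 2 ≤ j ∨ j + 2 ≤ i := by rcases le_abs'.mp hij with h | h <;> omega
  rw [hblock, hblock, mul_sub, sub_mul, he.block_mul_mul_block_of_hasSum ha hfar, sub_self]
end
end

section
/- Let A be a C*-algebra and let (r_i)_{i∈ℕ} be positive elements of A whose partial sums p_n = ∑_{i<n} r_i form an increasing approximate unit for A with p_{n+1}·p_n = p_n for all n (hence the r_i pairwise commute and r_i·r_j = 0 whenever |i − j| ≥ 2). Let α : ℕ → 𝕋 satisfy lim_{i→∞} (α(i+1) − α(i)) = 0 in ℂ. Then the family (2·(Re(α(i)·conj(α(i+1))) − 1)·r_i·r_{i+1})_{i∈ℕ} is summable in A; that is, the series ∑_i 2·(Re(α(i)·conj(α(i+1))) − 1)·r_i·r_{i+1} converges unconditionally in the norm of A. -/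
/-!
Write `p n = ∑ i < n, r i`. The relation `p (n + 1) * p n = p n` propagates to
`p m * p n = p n = p n * p m` for `n < m`, which turns `r i * r (i + 1)` into
`q i = p (i + 1) - p (i + 1) ^ 2` and makes the `q i` pairwise orthogonal. The uniform boundedness
principle bounds an approximate unit, hence the `q i`, and the coefficient equals
`-‖α (i + 1) - α i‖ ^ 2`, which tends to `0`. Finally, for pairwise orthogonal self-adjoint
elements the `C⋆`-identity gives `‖∑ y i‖ ^ 2 ^ k ≤ ∑ ‖y i‖ ^ 2 ^ k` for every `k`, so the norm of
a finite sum is at most the largest norm of its terms, and the Cauchy criterion follows.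
-/

open Filter Topology MultiplierAlgebra

noncomputable section

section

variable {R : Type*} [NonUnitalRing R] {a b : R}

lemma sub_mul_self_mul_sub_mul_self_of_mul_eq_left (h : a * b = a) :
    (a - a * a) * (b - b * b) = 0 := by
  have hab : a * (b - b * b) = 0 := by rw [mul_sub, ← mul_assoc, h, h, sub_self]
  rw [sub_mul, mul_assoc, hab, mul_zero, sub_zero]

lemma sub_mul_self_mul_sub_mul_self_of_mul_eq_right (h : b * a = a) :
    (b - b * b) * (a - a * a) = 0 := by
  have hba : (b - b * b) * a = 0 := by rw [sub_mul, mul_assoc, h, h, sub_self]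
  rw [mul_sub, ← mul_assoc, hba, zero_mul, sub_zero]

end

def IsLeftUnitChain {R : Type*} [Mul R] (p : ℕ → R) : Prop := ∀ n, p (n + 1) * p n = p n

namespace IsLeftUnitChain

variable {R : Type*} {p : ℕ → R}

section Semigroup

variable [Semigroup R] (hp : IsLeftUnitChain p)
include hp

lemma mul_eq_right_of_lt {m n : ℕ} (h : n < m) : p m * p n = p n := by
  induction m, h using Nat.le_induction with
  | base => exact hp n
  | succ m _ ih => rw [← ih, ← mul_assoc, hp m]

lemma mul_eq_left_of_lt [StarMul R] (hsa : ∀ n, IsSelfAdjoint (p n)) {m n : ℕ} (h : n < m) :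
    p n * p m = p n := by
  simpa only [star_mul, (hsa _).star_eq] using congrArg star (hp.mul_eq_right_of_lt h)

end Semigroup

variable [NonUnitalRing R] [StarRing R] (hp : IsLeftUnitChain p) (hsa : ∀ n, IsSelfAdjoint (p n))
include hp hsa

lemma sub_mul_sub_succ (i : ℕ) :
    (p (i + 1) - p i) * (p (i + 2) - p (i + 1)) = p (i + 1) - p (i + 1) * p (i + 1) := by
  simp only [mul_sub, sub_mul, hp.mul_eq_left_of_lt hsa (Nat.lt_succ_self _),
    hp.mul_eq_left_of_lt hsa (show i < i + 2 by omega)]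
  abel

lemma pairwise_sub_mul_self_mul_eq_zero :
    Pairwise fun m n => (p m - p m * p m) * (p n - p n * p n) = 0 := by
  intro m n hmn
  rcases hmn.lt_or_gt with h | h
  · exact sub_mul_self_mul_sub_mul_self_of_mul_eq_left (hp.mul_eq_left_of_lt hsa h)
  · exact sub_mul_self_mul_sub_mul_self_of_mul_eq_right (hp.mul_eq_right_of_lt h)

end IsLeftUnitChain

lemma IsSelfAdjoint.mul_self {R : Type*} [Mul R] [StarMul R] {x : R} (hx : IsSelfAdjoint x) :
    IsSelfAdjoint (x * x) :=
  (hx.commute_iff hx).mp (Commute.refl x)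

section Orthogonal

variable {A ι : Type*}

lemma Finset.sum_mul_sum_self_of_pairwise_mul_eq_zero [NonUnitalNonAssocSemiring A]
    {s : Finset ι} {y : ι → A} (horth : (s : Set ι).Pairwise fun i j => y i * y j = 0) :
    (∑ i ∈ s, y i) * (∑ i ∈ s, y i) = ∑ i ∈ s, y i * y i := by
  rw [Finset.sum_mul_sum]
  exact Finset.sum_congr rfl fun i hi =>
    Finset.sum_eq_single_of_mem i hi fun j hj hji => horth hi hj hji.symm

variable [NonUnitalNormedRing A] [StarRing A] [CStarRing A]

lemma norm_sum_pow_two_pow_le_of_pairwise_mul_eq_zero (k : ℕ) {s : Finset ι} {y : ι → A}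
    (hsa : ∀ i ∈ s, IsSelfAdjoint (y i))
    (horth : (s : Set ι).Pairwise fun i j => y i * y j = 0) :
    ‖∑ i ∈ s, y i‖ ^ 2 ^ k ≤ ∑ i ∈ s, ‖y i‖ ^ 2 ^ k := by
  induction k generalizing y with
  | zero => simpa using norm_sum_le s y
  | succ k ih =>
    have hsum : IsSelfAdjoint (∑ i ∈ s, y i) := isSelfAdjoint_sum s hsa
    have hsq := ih (y := fun i => y i * y i) (fun i hi => (hsa i hi).mul_self)
      fun i hi j hj hij => by
        change y i * y i * (y j * y j) = 0
        rw [mul_assoc, ← mul_assoc (y i) (y j), horth hi hj hij, zero_mul, mul_zero]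
    calc ‖∑ i ∈ s, y i‖ ^ 2 ^ (k + 1) = ‖(∑ i ∈ s, y i) * (∑ i ∈ s, y i)‖ ^ 2 ^ k := by
          rw [hsum.norm_mul_self, pow_succ, pow_mul']
      _ ≤ ∑ i ∈ s, ‖y i * y i‖ ^ 2 ^ k := by
          rwa [Finset.sum_mul_sum_self_of_pairwise_mul_eq_zero horth]
      _ ≤ ∑ i ∈ s, ‖y i‖ ^ 2 ^ (k + 1) := by
          refine Finset.sum_le_sum fun i _ => ?_
          rw [pow_succ, pow_mul']
          gcongr
          exact (norm_mul_le _ _).trans_eq (sq _).symm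

lemma norm_sum_le_of_pairwise_mul_eq_zero {s : Finset ι} {y : ι → A} {M : ℝ} (hM : 0 ≤ M)
    (hsa : ∀ i ∈ s, IsSelfAdjoint (y i))
    (horth : (s : Set ι).Pairwise fun i j => y i * y j = 0) (hy : ∀ i ∈ s, ‖y i‖ ≤ M) :
    ‖∑ i ∈ s, y i‖ ≤ M := by
  by_contra! hlt
  have hMpos : 0 < M := hM.lt_of_ne <| by rintro rfl; simp_all [norm_le_zero_iff]
  have hbound : ∀ k : ℕ, (‖∑ i ∈ s, y i‖ / M) ^ 2 ^ k ≤ s.card := fun k => by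
    rw [div_pow, div_le_iff₀ (by positivity)]
    calc ‖∑ i ∈ s, y i‖ ^ 2 ^ k ≤ ∑ i ∈ s, ‖y i‖ ^ 2 ^ k :=
          norm_sum_pow_two_pow_le_of_pairwise_mul_eq_zero k hsa horth
      _ ≤ ∑ _i ∈ s, M ^ 2 ^ k := by gcongr with i hi; exact hy i hi
      _ = s.card * M ^ 2 ^ k := by rw [Finset.sum_const, nsmul_eq_mul]
  have hunbounded : Tendsto (fun k : ℕ => (‖∑ i ∈ s, y i‖ / M) ^ 2 ^ k) atTop atTop :=
    (tendsto_pow_atTop_atTop_of_one_lt ((one_lt_div hMpos).mpr hlt)).comp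
      (tendsto_pow_atTop_atTop_of_one_lt one_lt_two)
  obtain ⟨k, hk⟩ := (hunbounded.eventually_gt_atTop (s.card : ℝ)).exists
  exact (hbound k).not_gt hk

lemma summable_of_pairwise_mul_eq_zero [CompleteSpace A] {y : ι → A}
    (hsa : ∀ i, IsSelfAdjoint (y i)) (horth : Pairwise fun i j => y i * y j = 0)
    (hy : Tendsto (fun i => ‖y i‖) cofinite (𝓝 0)) :
    Summable y := by
  refine summable_iff_vanishing_norm.mpr fun ε hε => ?_
  have hfin : {i | ¬ ‖y i‖ < ε / 2}.Finite :=
    eventually_cofinite.mp (hy.eventually (gt_mem_nhds (half_pos hε)))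
  refine ⟨hfin.toFinset, fun t ht => ?_⟩
  have hsmall : ∀ i ∈ t, ‖y i‖ ≤ ε / 2 := fun i hi => by
    by_contra! h
    exact Finset.disjoint_left.mp ht hi (hfin.mem_toFinset.mpr h.not_gt)
  calc ‖∑ i ∈ t, y i‖ ≤ ε / 2 := norm_sum_le_of_pairwise_mul_eq_zero (by positivity)
        (fun i _ => hsa i) (horth.set_pairwise _) hsmall
    _ < ε := half_lt_self hε

end Orthogonal

lemma exists_norm_le_of_tendsto_mul_self {𝕜 R : Type*} [NontriviallyNormedField 𝕜]
    [NonUnitalNormedRing R] [NormedSpace 𝕜 R] [IsScalarTower 𝕜 R R] [SMulCommClass 𝕜 R R]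
    [RegularNormedAlgebra 𝕜 R] [CompleteSpace R] {e : ℕ → R}
    (he : ∀ a, Tendsto (fun n => e n * a) atTop (𝓝 a)) :
    ∃ C, ∀ n, ‖e n‖ ≤ C := by
  obtain ⟨C, hC⟩ := banach_steinhaus (g := (ContinuousLinearMap.mul 𝕜 R <| e ·)) fun a => by
    obtain ⟨C, hC⟩ := (he a).norm.bddAbove_range
    exact ⟨C, fun n => hC (Set.mem_range_self n)⟩
  exact ⟨C, fun n => (ContinuousLinearMap.opNorm_mul_apply 𝕜 R (e n)).symm.trans_le (hC n)⟩

lemma Circle.two_mul_re_mul_conj_sub_one (z w : Circle) :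
    2 * (((z : ℂ) * (starRingEnd ℂ) (w : ℂ)).re - 1) = -‖(w : ℂ) - z‖ ^ 2 := by
  have hz := Circle.normSq_coe z
  have hw := Circle.normSq_coe w
  rw [Complex.sq_norm, Complex.normSq_apply] at *
  simp only [Complex.mul_re, Complex.conj_re, Complex.conj_im, Complex.sub_re, Complex.sub_im]
  linear_combination hz + hw

theorem summable_tail_general (A : Type*) [NonUnitalCStarAlgebra A] [PartialOrder A]
    [StarOrderedRing A] (r : ℕ → A)
    (hpos : ∀ i, 0 ≤ r i)
    (happrox : ∀ a : A,
      Tendsto (fun n => ‖(∑ i ∈ Finset.range n, r i) * a - a‖) atTop (𝓝 0))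
    (hsucc : ∀ n, (∑ i ∈ Finset.range (n + 1), r i) * (∑ i ∈ Finset.range n, r i) =
      ∑ i ∈ Finset.range n, r i)
    (α : ℕ → Circle)
    (hα : Tendsto (fun i => (α (i + 1) : ℂ) - (α i : ℂ)) atTop (𝓝 0)) :
    Summable (fun i =>
      (((2 * (((α i : ℂ) * (starRingEnd ℂ) (α (i + 1) : ℂ)).re - 1) : ℝ) : ℂ)) •
        (r i * r (i + 1))) := by
  set p : ℕ → A := fun n => ∑ i ∈ Finset.range n, r i
  have hp : IsLeftUnitChain p := hsucc
  have hsa : ∀ n, IsSelfAdjoint (p n) := fun n =>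
    (Finset.sum_nonneg fun i _ => hpos i).isSelfAdjoint
  have hr : ∀ i, r i = p (i + 1) - p i := fun i => by simp [p, Finset.sum_range_succ]
  obtain ⟨C, hC⟩ := exists_norm_le_of_tendsto_mul_self (𝕜 := ℂ) fun a =>
    tendsto_iff_norm_sub_tendsto_zero.mpr (happrox a)
  have hq : ∀ i, ‖p (i + 1) - p (i + 1) * p (i + 1)‖ ≤ C + C * C := fun i => by
    have hC0 : 0 ≤ C := (norm_nonneg _).trans (hC 0)
    grw [norm_sub_le, norm_mul_le, hC, hC]
  simp_rw [Circle.two_mul_re_mul_conj_sub_one, hr, hp.sub_mul_sub_succ hsa]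
  refine summable_of_pairwise_mul_eq_zero
    (fun i => IsSelfAdjoint.smul (Complex.conj_ofReal _) ((hsa _).sub (hsa _).mul_self)) ?_ ?_
  · intro i j hij
    rw [smul_mul_smul_comm, hp.pairwise_sub_mul_self_mul_eq_zero hsa (by omega), smul_zero]
  · rw [Nat.cofinite_eq_atTop]
    have hlim : Tendsto (fun i => ‖(α (i + 1) : ℂ) - α i‖ ^ 2 * (C + C * C)) atTop (𝓝 0) := by
      simpa using (hα.norm.pow 2).mul_const (C + C * C)
    refine squeeze_zero (fun i => norm_nonneg _) (fun i => ?_) hlim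
    rw [norm_smul, Complex.norm_real, norm_neg, Real.norm_of_nonneg (by positivity)]
    gcongr
    exact hq i

/-- if `α(i+1) − α(i) → 0` then the family
`2(Re(α(i) conj(α(i+1))) − 1) r_i r_{i+1}` is (unconditionally norm) summable. -/
theorem summable_tail (A : Type*) [NonUnitalCStarAlgebra A] [PartialOrder A]
    [StarOrderedRing A] (r : ℕ → A)
    (hpos : ∀ i, 0 ≤ r i)
    (hmono : Monotone (fun n => ∑ i ∈ Finset.range n, r i))
    (happrox : ∀ a : A,
      Tendsto (fun n => ‖(∑ i ∈ Finset.range n, r i) * a - a‖) atTop (𝓝 0))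
    (hsucc : ∀ n, (∑ i ∈ Finset.range (n + 1), r i) * (∑ i ∈ Finset.range n, r i) =
      ∑ i ∈ Finset.range n, r i)
    (α : ℕ → Circle)
    (hα : Tendsto (fun i => (α (i + 1) : ℂ) - (α i : ℂ)) atTop (𝓝 0)) :
    Summable (fun i =>
      (((2 * (((α i : ℂ) * (starRingEnd ℂ) (α (i + 1) : ℂ)).re - 1) : ℝ) : ℂ)) •
        (r i * r (i + 1))) :=
  summable_tail_general A r hpos happrox hsucc α hα
end
end

section
/- Let A be a C*-algebra, H a complex Hilbert space, and π : A → B(H) a faithful (injective) irreducible representation, i.e. an injective star-algebra homomorphism such that the only closed subspaces of H invariant under every operator π(a) are {0} and H. Let (r_i)_{i∈ℕ} be positive elements of A with ‖r_i‖ = 1 for all i whose partial sums p_n = ∑_{i<n} r_i form an approximate unit for A. Then for all i, j, k ∈ ℕ and every ε > 0 there exists a ∈ A with ‖a‖ = 1 and ‖r_i^k·a·r_j^k‖ ≥ 1 − ε. -/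
open Filter Topology MultiplierAlgebra

noncomputable section

/-!
Suppose `‖u x v‖ < c = 1 - ε` on the unit sphere, where `u = r_i^n`, `v = r_j^n`. Then
`x ↦ u x v` is a `c`-contraction, so `T = π u` and `S = π v` satisfy
`‖T^m π(x) S^m‖ ≤ c^m ‖x‖`. Let `g` vanish below some `γ` with `c < γ² < 1` and have `g 1 = 1`.
Then `g(T) = h T^m` and `g(S) = S^m h'` with `‖h‖, ‖h'‖ ≤ γ^{-m}`, hence
`‖g(T) π(x) g(S)‖ ≤ (c/γ²)^m ‖x‖ → 0`, i.e. `g(T) π(A) g(S) = 0`. As `T, S` are positive of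
norm one, `1` lies in their spectra and `g(T), g(S) ≠ 0`. This is impossible for an irreducible `π`:
the closed invariant subspace `{v | g(T) π(A) v = 0}` contains the range of `g(S)`, so it is
everything, and then `π(A) g(T)* = 0` forces `g(T)* = 0`.
-/

/-- `selfPow a k = a ^ (k + 1)`, which makes sense in a non-unital algebra. -/
def selfPow {A : Type*} [Mul A] (a : A) : ℕ → A
  | 0 => a
  | k + 1 => a * selfPow a k

lemma selfPow_map {A B : Type*} [Mul A] [Mul B] {F : Type*} [FunLike F A B]
    [MulHomClass F A B] (φ : F) (a : A) (n : ℕ) :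
    φ (selfPow a n) = selfPow (φ a) n := by
  induction n with
  | zero => rfl
  | succ n ih => rw [selfPow, selfPow, map_mul, ih]

lemma selfPow_eq_pow {B : Type*} [Monoid B] (b : B) (n : ℕ) :
    selfPow b n = b ^ (n + 1) := by
  induction n with
  | zero => simp [selfPow]
  | succ n ih => rw [selfPow, ih, pow_succ' b (n + 1)]

lemma norm_iterate_le_of_norm_le {E : Type*} [SeminormedAddGroup E] {f : E → E} {c : ℝ}
    (hc : 0 ≤ c) (hf : ∀ x, ‖f x‖ ≤ c * ‖x‖) (m : ℕ) (x : E) : ‖f^[m] x‖ ≤ c ^ m * ‖x‖ := by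
  induction m with
  | zero => simp
  | succ m ih =>
    rw [Function.iterate_succ_apply', pow_succ', mul_assoc]
    exact (hf _).trans (mul_le_mul_of_nonneg_left ih hc)

lemma norm_mul_mul_le_of_norm_eq_one {𝕜 R : Type*} [RCLike 𝕜] [NonUnitalSeminormedRing R]
    [NormedSpace 𝕜 R] [IsScalarTower 𝕜 R R] [SMulCommClass 𝕜 R R] {u v : R} {c : ℝ} (hc : 0 ≤ c)
    (h : ∀ x, ‖x‖ = 1 → ‖u * x * v‖ ≤ c) (x : R) : ‖u * x * v‖ ≤ c * ‖x‖ := by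
  simpa using (ContinuousLinearMap.mulLeftRight 𝕜 R u v).le_of_opNorm_le
    (ContinuousLinearMap.opNorm_le_of_unit_norm hc (by simpa using h)) x

lemma map_iterate_mul_mul {A B F : Type*} [Mul A] [Monoid B] [FunLike F A B] [MulHomClass F A B]
    (π : F) (u v x : A) (m : ℕ) :
    π ((fun y => u * y * v)^[m] x) = π u ^ m * π x * π v ^ m := by
  induction m with
  | zero => simp
  | succ m ih =>
    rw [Function.iterate_succ_apply', map_mul, map_mul, ih, pow_succ', pow_succ]
    simp only [mul_assoc]

def cutoff (γ t : ℝ) : ℝ := max 0 (min 1 ((t - γ) / (1 - γ)))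

lemma continuous_cutoff (γ : ℝ) : Continuous (cutoff γ) := by
  unfold cutoff; fun_prop

lemma cutoff_eq_zero_of_le {γ t : ℝ} (hγ : γ ≤ 1) (ht : t ≤ γ) : cutoff γ t = 0 :=
  max_eq_left <| (min_le_right _ _).trans <|
    div_nonpos_of_nonpos_of_nonneg (by linarith) (by linarith)

lemma cutoff_one {γ : ℝ} (hγ : γ < 1) : cutoff γ 1 = 1 := by
  simp [cutoff, div_self (sub_ne_zero.mpr hγ.ne')]

lemma abs_cutoff_le_one (γ t : ℝ) : |cutoff γ t| ≤ 1 :=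
  (abs_of_nonneg (le_max_left _ _)).trans_le (max_le zero_le_one (min_le_left _ _))

section ContinuousFunctionalCalculus

variable {B : Type*} [CStarAlgebra B] {a b : B} {g : ℝ → ℝ} {γ : ℝ}

lemma exists_cfc_eq_mul_pow (ha : IsSelfAdjoint a) (hg : Continuous g) (hγ : 0 < γ)
    (hg_zero : ∀ t ≤ γ, g t = 0) (hg_le : ∀ t, |g t| ≤ 1) (m : ℕ) :
    ∃ h : B, ‖h‖ ≤ γ⁻¹ ^ m ∧ cfc g a = h * a ^ m ∧ cfc g a = a ^ m * h := by
  set f : ℝ → ℝ := fun t => g t * (max γ t)⁻¹ ^ m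
  have hmax : ∀ t, 0 < max γ t := fun t => hγ.trans_le (le_max_left _ _)
  have hf : Continuous f :=
    hg.mul (((continuous_const.max continuous_id).inv₀ fun t => (hmax t).ne').pow m)
  have hfg : ∀ t, f t * t ^ m = g t := by
    intro t
    rcases le_or_gt t γ with ht | ht
    · simp [f, hg_zero t ht]
    · rw [mul_assoc, max_eq_right ht.le, ← mul_pow, inv_mul_cancel₀ (hγ.trans ht).ne', one_pow,
        mul_one]
  have hga : cfc g a = cfc f a * a ^ m := by
    rw [← cfc_pow_id (R := ℝ) a m ha, ← cfc_mul f _ a hf.continuousOn (by fun_prop)]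
    exact cfc_congr fun t _ => (hfg t).symm
  refine ⟨cfc f a, norm_cfc_le (by positivity) fun t _ => ?_, hga, ?_⟩
  · rw [Real.norm_eq_abs, abs_mul, abs_of_pos (pow_pos (inv_pos.mpr (hmax t)) m)]
    exact (mul_le_of_le_one_left (by positivity) (hg_le t)).trans
      (pow_le_pow_left₀ (inv_nonneg.mpr (hmax t).le) (inv_anti₀ hγ (le_max_left _ _)) m)
  · rw [hga, ← cfc_pow_id (R := ℝ) a m ha, ← cfc_mul f _ a hf.continuousOn (by fun_prop),
      ← cfc_mul _ f a (by fun_prop) hf.continuousOn]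
    exact cfc_congr fun t _ => mul_comm _ _

lemma cfc_mul_mul_cfc_eq_zero (ha : IsSelfAdjoint a) (hb : IsSelfAdjoint b) (hg : Continuous g)
    (hγ : 0 < γ) (hg_zero : ∀ t ≤ γ, g t = 0) (hg_le : ∀ t, |g t| ≤ 1) {c C : ℝ} (hc : 0 ≤ c)
    (hcγ : c < γ ^ 2) {y : B} (hy : ∀ m, ‖a ^ m * y * b ^ m‖ ≤ c ^ m * C) :
    cfc g a * y * cfc g b = 0 := by
  have hbound : ∀ m : ℕ, ‖cfc g a * y * cfc g b‖ ≤ (c / γ ^ 2) ^ m * C := by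
    intro m
    obtain ⟨h, hh, hga, -⟩ := exists_cfc_eq_mul_pow ha hg hγ hg_zero hg_le m
    obtain ⟨h', hh', -, hgb⟩ := exists_cfc_eq_mul_pow hb hg hγ hg_zero hg_le m
    calc ‖cfc g a * y * cfc g b‖ = ‖h * (a ^ m * y * b ^ m) * h'‖ := by
          rw [hga, hgb]; noncomm_ring
      _ ≤ ‖h‖ * ‖a ^ m * y * b ^ m‖ * ‖h'‖ := norm_mul₃_le
      _ ≤ γ⁻¹ ^ m * (c ^ m * C) * γ⁻¹ ^ m := by
          have := (norm_nonneg _).trans (hy m)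
          gcongr
          exact hy m
      _ = (c / γ ^ 2) ^ m * C := by rw [div_pow, ← pow_mul, mul_comm 2 m, pow_mul, inv_pow]; ring
  have hlim : Tendsto (fun m : ℕ => (c / γ ^ 2) ^ m * C) atTop (𝓝 0) := by
    simpa using (tendsto_pow_atTop_nhds_zero_of_lt_one (by positivity)
      ((div_lt_one (by positivity)).mpr hcγ)).mul_const C
  exact norm_le_zero_iff.mp (ge_of_tendsto' hlim hbound)

lemma cfc_ne_zero_of_mem_spectrum (ha : IsSelfAdjoint a) (hg : Continuous g) {t : ℝ}
    (ht : t ∈ spectrum ℝ a) (hgt : g t ≠ 0) : cfc g a ≠ 0 := by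
  have : Nontrivial B := by
    by_contra h
    rw [not_nontrivial_iff_subsingleton] at h
    simp at ht
  intro h
  have hmem : g t ∈ spectrum ℝ (cfc g a) := cfc_map_spectrum g a ▸ ⟨t, ht, rfl⟩
  rw [h, spectrum.zero_eq] at hmem
  exact hgt hmem

lemma one_mem_spectrum_pow [PartialOrder B] [StarOrderedRing B] (hb : 0 ≤ b) (hb1 : ‖b‖ = 1)
    (n : ℕ) : 1 ∈ spectrum ℝ (b ^ n) := by
  have : Nontrivial B := nontrivial_of_ne b 0 (by rintro rfl; simp at hb1)
  have h1 : (1 : ℝ) ∈ spectrum ℝ b := hb1 ▸ CStarAlgebra.norm_mem_spectrum_of_nonneg hb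
  rw [← cfc_pow_id (R := ℝ) b n hb.isSelfAdjoint, cfc_map_spectrum _ b hb.isSelfAdjoint]
  exact ⟨1, h1, one_pow n⟩

end ContinuousFunctionalCalculus

lemma isSelfAdjoint_map_selfPow {A B F : Type*} [Mul A] [Star A] [Monoid B] [StarMul B]
    [FunLike F A B] [MulHomClass F A B] [StarHomClass F A B] (π : F) {r : A}
    (hr : IsSelfAdjoint r) (k : ℕ) : IsSelfAdjoint (π (selfPow r k)) := by
  rw [selfPow_map, selfPow_eq_pow]
  exact (hr.map π).pow _

lemma one_mem_spectrum_map_selfPow {A B : Type*} [NonUnitalCStarAlgebra A] [PartialOrder A]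
    [StarOrderedRing A] [CStarAlgebra B] [PartialOrder B] [StarOrderedRing B]
    (π : A →⋆ₙₐ[ℂ] B) (hinj : Function.Injective π) {r : A} (hr : 0 ≤ r) (hr1 : ‖r‖ = 1)
    (k : ℕ) : 1 ∈ spectrum ℝ (π (selfPow r k)) := by
  rw [selfPow_map, selfPow_eq_pow]
  exact one_mem_spectrum_pow (map_nonneg π hr) (by rw [NonUnitalStarAlgHom.norm_map π hinj, hr1]) _

section Irreducible

variable {A H F : Type*} [Mul A]

lemma forall_mul_map_eq_zero_or_eq_zero {𝕜 : Type*} [NontriviallyNormedField 𝕜]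
    [NormedAddCommGroup H] [NormedSpace 𝕜 H] [FunLike F A (H →L[𝕜] H)]
    [MulHomClass F A (H →L[𝕜] H)] {π : F}
    (hirr : ∀ S : Submodule 𝕜 H, IsClosed (S : Set H) →
      (∀ a : A, ∀ x ∈ S, π a x ∈ S) → S = ⊥ ∨ S = ⊤)
    {P Q : H →L[𝕜] H} (h : ∀ x, P * π x * Q = 0) : (∀ x, P * π x = 0) ∨ Q = 0 := by
  let K : Submodule 𝕜 H := ⨅ x : A, LinearMap.ker ((P * π x : H →L[𝕜] H) : H →ₗ[𝕜] H)
  have hK : ∀ v, v ∈ K ↔ ∀ x, P (π x v) = 0 := by simp [K, Submodule.mem_iInf]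
  have hclosed : IsClosed (K : Set H) := by
    simpa [K, Submodule.coe_iInf] using isClosed_iInter fun x => (P * π x).isClosed_ker
  have hinv : ∀ a : A, ∀ v ∈ K, π a v ∈ K := fun a v hv =>
    (hK _).2 fun x => by simpa using (hK v).1 hv (x * a)
  rcases hirr K hclosed hinv with hbot | htop
  · right
    ext w
    have hw : Q w ∈ K := (hK _).2 fun x => by simpa using congr($(h x) w)
    simpa [hbot] using hw
  · left
    intro x
    ext v
    exact (hK v).1 (htop ▸ Submodule.mem_top) x

lemma eq_zero_or_eq_zero_of_forall_mul_map_mul_eq_zero {𝕜 : Type*} [RCLike 𝕜] [Star A]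
    [NormedAddCommGroup H] [InnerProductSpace 𝕜 H] [CompleteSpace H]
    [FunLike F A (H →L[𝕜] H)] [MulHomClass F A (H →L[𝕜] H)] [StarHomClass F A (H →L[𝕜] H)]
    {π : F} (hirr : ∀ S : Submodule 𝕜 H, IsClosed (S : Set H) →
      (∀ a : A, ∀ x ∈ S, π a x ∈ S) → S = ⊥ ∨ S = ⊤)
    (hπ : ∃ a, π a ≠ 0) {P Q : H →L[𝕜] H} (h : ∀ x, P * π x * Q = 0) : P = 0 ∨ Q = 0 := by
  refine or_iff_not_imp_right.mpr fun hQ => ?_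
  have hP : ∀ x, P * π x = 0 := (forall_mul_map_eq_zero_or_eq_zero hirr h).resolve_right hQ
  have hP' : ∀ x, 1 * π x * star P = 0 := fun x => by
    simpa [map_star] using congr(star $(hP (star x)))
  obtain ⟨a, ha⟩ := hπ
  exact star_eq_zero.mp <|
    (forall_mul_map_eq_zero_or_eq_zero hirr hP').resolve_left fun h1 => ha (by simpa using h1 a)

end Irreducible

theorem hypW_of_irreducible_general (A : Type*) [NonUnitalCStarAlgebra A] [PartialOrder A]
    [StarOrderedRing A]
    (H : Type*) [NormedAddCommGroup H] [InnerProductSpace ℂ H] [CompleteSpace H]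
    (π : A →⋆ₙₐ[ℂ] (H →L[ℂ] H)) (hinj : Function.Injective π)
    (hirr : ∀ S : Submodule ℂ H, IsClosed (S : Set H) →
      (∀ a : A, ∀ x ∈ S, π a x ∈ S) → S = ⊥ ∨ S = ⊤)
    (r : ℕ → A) (hpos : ∀ i, 0 ≤ r i) (hnorm : ∀ i, ‖r i‖ = 1) :
    ∀ i j k : ℕ, ∀ ε : ℝ, 0 < ε →
      ∃ a : A, ‖a‖ = 1 ∧ 1 - ε ≤ ‖selfPow (r i) k * a * selfPow (r j) k‖ := by
  intro i j k ε hε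
  obtain hε1 | hε1 := le_or_gt 1 ε
  · exact ⟨r i, hnorm i, by linarith [norm_nonneg (selfPow (r i) k * r i * selfPow (r j) k)]⟩
  by_contra! hsmall
  have hdecay : ∀ x m, ‖π (selfPow (r i) k) ^ m * π x * π (selfPow (r j) k) ^ m‖
      ≤ (1 - ε) ^ m * ‖x‖ := fun x m => by
    rw [← map_iterate_mul_mul, NonUnitalStarAlgHom.norm_map π hinj]
    exact norm_iterate_le_of_norm_le (by linarith)
      (norm_mul_mul_le_of_norm_eq_one (𝕜 := ℂ) (by linarith) fun y hy => (hsmall y hy).le) m x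
  have hsa l := isSelfAdjoint_map_selfPow π (hpos l).isSelfAdjoint k
  have hspec l := one_mem_spectrum_map_selfPow π hinj (hpos l) (hnorm l) k
  -- `γ = (1 + c) / 2` for the contraction constant `c = 1 - ε`, so that `c < γ ^ 2 < 1`
  set γ := 1 - ε / 2 with hγ
  have hγ0 : 0 < γ := by linarith
  have hγ1 : γ < 1 := by linarith
  have hcγ : 1 - ε < γ ^ 2 := by rw [hγ]; nlinarith
  have hkill : ∀ x, cfc (cutoff γ) (π (selfPow (r i) k)) * π x
      * cfc (cutoff γ) (π (selfPow (r j) k)) = 0 := fun x =>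
    cfc_mul_mul_cfc_eq_zero (hsa i) (hsa j) (continuous_cutoff γ) hγ0
      (fun _ => cutoff_eq_zero_of_le hγ1.le) (abs_cutoff_le_one γ) (by linarith) hcγ (hdecay x)
  have hπ : π (r i) ≠ 0 := norm_ne_zero_iff.mp <| by
    rw [NonUnitalStarAlgHom.norm_map π hinj, hnorm]; exact one_ne_zero
  have hcut : cutoff γ 1 ≠ 0 := by rw [cutoff_one hγ1]; exact one_ne_zero
  rcases eq_zero_or_eq_zero_of_forall_mul_map_mul_eq_zero hirr ⟨r i, hπ⟩ hkill with h | h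
  · exact cfc_ne_zero_of_mem_spectrum (hsa i) (continuous_cutoff γ) (hspec i) hcut h
  · exact cfc_ne_zero_of_mem_spectrum (hsa j) (continuous_cutoff γ) (hspec j) hcut h

/-- STATEMENT 19: if `A` has a faithful irreducible representation and an approximate
unit of partial sums of norm-one positive elements `r_i`, then the norm condition of
Hypothesis (W) holds.
(`selfPow (r i) k` is the `(k+1)`-st power of `r i`, realizing all positive powers.) -/
theorem hypW_of_irreducible (A : Type*) [NonUnitalCStarAlgebra A] [PartialOrder A]
    [StarOrderedRing A]
    (H : Type*) [NormedAddCommGroup H] [InnerProductSpace ℂ H] [CompleteSpace H]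
    (π : A →⋆ₙₐ[ℂ] (H →L[ℂ] H)) (hinj : Function.Injective π)
    (hirr : ∀ S : Submodule ℂ H, IsClosed (S : Set H) →
      (∀ a : A, ∀ x ∈ S, π a x ∈ S) → S = ⊥ ∨ S = ⊤)
    (r : ℕ → A) (hpos : ∀ i, 0 ≤ r i) (hnorm : ∀ i, ‖r i‖ = 1)
    (happrox : ∀ a : A,
      Tendsto (fun n => ‖(∑ i ∈ Finset.range n, r i) * a - a‖) atTop (𝓝 0)) :
    ∀ i j k : ℕ, ∀ ε : ℝ, 0 < ε →
      ∃ a : A, ‖a‖ = 1 ∧ 1 - ε ≤ ‖selfPow (r i) k * a * selfPow (r j) k‖ :=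
  hypW_of_irreducible_general A H π hinj hirr r hpos hnorm
end
end
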